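/- The proximal-gradient (ISTA) iterates x_{k+1} = prox_{g_A}(x_k − ∇f(x_k)) starting from x₀ = 0 are coordinatewise nondecreasing: 0 ≤ x_k ≤ x_{k+1} componentwise for all k ≥ 0. Consequently, the unique minimizer x⋆(ρ) of F_ρ is coordinatewise nonnegative. -/

import Mathlib

/-!
The forward map `x ↦ x - ∇f(x) = (I - Q) x + α D^{-1/2} e_v` is monotone because `I - Q` is
entrywise nonnegative, and soft-thresholding is monotone; so the ISTA step is monotone, and since
it maps `0` to a nonnegative vector its iterates from `0` increase.

For the minimizer: the off-diagonal entries of `Q` are nonpositive, so `F_ρ(|x|) ≤ F_ρ(x)`.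
As `Q ≽ αI` (positive semidefiniteness of the normalized Laplacian), `F_ρ` is strongly convex:
comparing with the midpoint of `x⋆` and `|x⋆|` forces `x⋆ = |x⋆|`.
-/

open Finset

noncomputable section

/-- Degree of vertex `i` in the (unweighted) graph with adjacency matrix `A`. -/
def deg {n : ℕ} (A : Matrix (Fin n) (Fin n) ℝ) (i : Fin n) : ℝ := ∑ j, A i j

/-- The PageRank matrix `Q = αI + ((1−α)/2)·𝓛 = ((1+α)/2)·I − ((1−α)/2)·D^{-1/2} A D^{-1/2}`. -/
def Qmat {n : ℕ} (A : Matrix (Fin n) (Fin n) ℝ) (α : ℝ) : Matrix (Fin n) (Fin n) ℝ :=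
  fun i j => (if i = j then (1 + α) / 2 else 0)
    - ((1 - α) / 2) * A i j / (Real.sqrt (deg A i) * Real.sqrt (deg A j))

/-- Smooth PageRank objective `f(x) = (1/2)⟨x, Qx⟩ − α⟨D^{-1/2} e_v, x⟩` with seed vertex `v`. -/
def fPR {n : ℕ} (A : Matrix (Fin n) (Fin n) ℝ) (α : ℝ) (v : Fin n) (x : Fin n → ℝ) : ℝ :=
  (1 / 2) * (∑ i, x i * (Qmat A α).mulVec x i) - α * (x v / Real.sqrt (deg A v))

/-- Gradient of `fPR`: `∇f(x) = Qx − α·D^{-1/2} e_v`. -/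
def gradf {n : ℕ} (A : Matrix (Fin n) (Fin n) ℝ) (α : ℝ) (v : Fin n) (x : Fin n → ℝ) :
    Fin n → ℝ :=
  fun i => (Qmat A α).mulVec x i - α * (if i = v then 1 / Real.sqrt (deg A v) else 0)

/-- Weighted ℓ1 norm `‖D^{1/2} x‖₁ = ∑ i, √(d i)·|x i|`. -/
def l1w {n : ℕ} (A : Matrix (Fin n) (Fin n) ℝ) (x : Fin n → ℝ) : ℝ :=
  ∑ i, Real.sqrt (deg A i) * |x i|

/-- ℓ1-regularized PageRank objective `F_ρ(x) = f(x) + αρ‖D^{1/2}x‖₁`. -/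
def Freg {n : ℕ} (A : Matrix (Fin n) (Fin n) ℝ) (α : ℝ) (v : Fin n) (ρ : ℝ)
    (x : Fin n → ℝ) : ℝ :=
  fPR A α v x + α * ρ * l1w A x

/-- Coordinatewise soft-thresholding at levels `t·√(d i)`: this is the proximal map
`prox_{ηg}` of `g(x) = cαρ‖D^{1/2}x‖₁` with `t = η·c·α·ρ`. -/
def softT {n : ℕ} (A : Matrix (Fin n) (Fin n) ℝ) (t : ℝ) (w : Fin n → ℝ) : Fin n → ℝ :=
  fun i => Real.sign (w i) * max (|w i| - t * Real.sqrt (deg A i)) 0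

/-- Euclidean norm on `Fin n → ℝ`. -/
def enorm {n : ℕ} (x : Fin n → ℝ) : ℝ := Real.sqrt (∑ i, (x i) ^ 2)

open Classical in
/-- Degree-weighted volume of a vertex set: `vol(S) = ∑_{i ∈ S} d i`. -/
def volS {n : ℕ} (A : Matrix (Fin n) (Fin n) ℝ) (S : Set (Fin n)) : ℝ :=
  ∑ i ∈ Finset.univ.filter (fun i => i ∈ S), deg A i

/-- Neighbor set of a vertex. -/
def nbr {n : ℕ} (A : Matrix (Fin n) (Fin n) ℝ) (i : Fin n) : Set (Fin n) := {j | A i j ≠ 0}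

/-- Vertex boundary of `S`: vertices outside `S` with a neighbor in `S`. -/
def bdry {n : ℕ} (A : Matrix (Fin n) (Fin n) ℝ) (S : Set (Fin n)) : Set (Fin n) :=
  {j | j ∉ S ∧ ∃ i ∈ S, A j i ≠ 0}

/-- `A` is the adjacency matrix of a finite undirected unweighted loopless graph
with all degrees positive. -/
structure IsGraph {n : ℕ} (A : Matrix (Fin n) (Fin n) ℝ) : Prop where
  symm : ∀ i j, A i j = A j i
  zero_one : ∀ i j, A i j = 0 ∨ A i j = 1
  loopless : ∀ i, A i i = 0
  deg_pos : ∀ i, 0 < deg A i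


open Matrix

lemma sign_mul_max_abs_sub_eq {t : ℝ} (ht : 0 ≤ t) (u : ℝ) :
    Real.sign u * max (|u| - t) 0 = max (u - t) 0 - max (-u - t) 0 := by
  rcases lt_trichotomy u 0 with hu | rfl | hu
  · rw [Real.sign_of_neg hu, abs_of_neg hu, max_eq_right (by linarith : u - t ≤ 0)]
    ring
  · simp
  · rw [Real.sign_of_pos hu, abs_of_pos hu, max_eq_right (by linarith : -u - t ≤ 0)]
    ring

lemma monotone_sign_mul_max_abs_sub {t : ℝ} (ht : 0 ≤ t) :
    Monotone fun u : ℝ => Real.sign u * max (|u| - t) 0 := by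
  intro u u' h
  simp only [sign_mul_max_abs_sub_eq ht]
  have h₁ : max (u - t) 0 ≤ max (u' - t) 0 := max_le_max (by linarith) le_rfl
  have h₂ : max (-u' - t) 0 ≤ max (-u - t) 0 := max_le_max (by linarith) le_rfl
  linarith

lemma monotone_mulVec_of_nonneg {m ι : Type*} [Fintype ι] {M : Matrix m ι ℝ}
    (hM : ∀ i j, 0 ≤ M i j) : Monotone (M *ᵥ ·) :=
  fun _ _ h i => Finset.sum_le_sum fun j _ => mul_le_mul_of_nonneg_left (h j) (hM i j)

/-- The Laplacian `D - A` of a symmetric nonnegative weight matrix is positive semidefinite. -/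
lemma dotProduct_mulVec_le_sum_rowSum_mul_sq {ι : Type*} [Fintype ι] {A : Matrix ι ι ℝ}
    (hsymm : ∀ i j, A i j = A j i) (hA : ∀ i j, 0 ≤ A i j) (u : ι → ℝ) :
    u ⬝ᵥ A *ᵥ u ≤ ∑ i, (∑ j, A i j) * u i ^ 2 := by
  have hswap : ∑ i, ∑ j, A i j * u j ^ 2 = ∑ i, (∑ j, A i j) * u i ^ 2 := by
    rw [Finset.sum_comm]
    simp only [Finset.sum_mul, hsymm]
  have hexpand : ∑ i, ∑ j, A i j * (u i - u j) ^ 2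
      = ∑ i, (∑ j, A i j) * u i ^ 2 + ∑ i, ∑ j, A i j * u j ^ 2
        - 2 * (u ⬝ᵥ A *ᵥ u) := by
    simp only [dotProduct, mulVec, Finset.mul_sum, Finset.sum_mul, ← Finset.sum_add_distrib,
      ← Finset.sum_sub_distrib]
    refine Finset.sum_congr rfl fun i _ => Finset.sum_congr rfl fun j _ => ?_
    ring
  have hnonneg : 0 ≤ ∑ i, ∑ j, A i j * (u i - u j) ^ 2 :=
    Finset.sum_nonneg fun i _ => Finset.sum_nonneg fun j _ => mul_nonneg (hA i j) (sq_nonneg _)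
  linarith

lemma dotProduct_mulVec_abs_le {ι : Type*} [Fintype ι] {Q : Matrix ι ι ℝ}
    (hQ : ∀ i j, i ≠ j → Q i j ≤ 0) (x : ι → ℝ) :
    |x| ⬝ᵥ Q *ᵥ |x| ≤ x ⬝ᵥ Q *ᵥ x := by
  simp only [dotProduct, mulVec, Finset.mul_sum, Pi.abs_apply]
  refine Finset.sum_le_sum fun i _ => Finset.sum_le_sum fun j _ => ?_
  rcases eq_or_ne i j with rfl | hij
  · rw [mul_left_comm, abs_mul_abs_self, mul_left_comm]
  · have hprod : x i * x j ≤ |x i| * |x j| := abs_mul (x i) (x j) ▸ le_abs_self _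
    calc |x i| * (Q i j * |x j|) = Q i j * (|x i| * |x j|) := by ring
      _ ≤ Q i j * (x i * x j) := mul_le_mul_of_nonpos_left hprod (hQ i j hij)
      _ = x i * (Q i j * x j) := by ring

lemma midpoint_dotProduct_mulVec {ι : Type*} [Fintype ι] (Q : Matrix ι ι ℝ)
    (x y : ι → ℝ) :
    ((2⁻¹ : ℝ) • (x + y)) ⬝ᵥ Q *ᵥ ((2⁻¹ : ℝ) • (x + y))
      = (x ⬝ᵥ Q *ᵥ x + y ⬝ᵥ Q *ᵥ y) / 2 - (x - y) ⬝ᵥ Q *ᵥ (x - y) / 4 := by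
  simp only [mulVec_smul, mulVec_add, mulVec_sub, smul_dotProduct, dotProduct_smul,
    add_dotProduct, dotProduct_add, sub_dotProduct, dotProduct_sub, smul_eq_mul]
  ring

section PageRank

variable {n : ℕ} (A : Matrix (Fin n) (Fin n) ℝ) {α ρ : ℝ}

variable {A} in
lemma IsGraph.nonneg (hG : IsGraph A) (i j : Fin n) : 0 ≤ A i j := by
  rcases hG.zero_one i j with h | h <;> simp [h]

lemma softT_monotone {t : ℝ} (ht : 0 ≤ t) : Monotone (softT A t) :=
  fun _ _ h i => monotone_sign_mul_max_abs_sub (mul_nonneg ht (Real.sqrt_nonneg _)) (h i)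

lemma softT_nonneg {t : ℝ} (ht : 0 ≤ t) {w : Fin n → ℝ} (hw : 0 ≤ w) :
    0 ≤ softT A t w := by
  have hzero : softT A t 0 = 0 := by
    ext i
    simp [softT]
  exact hzero ▸ softT_monotone A ht hw

variable {A} in
lemma one_sub_Qmat_nonneg (hG : IsGraph A) (hα1 : α ≤ 1) (i j : Fin n) :
    0 ≤ (1 - Qmat A α) i j := by
  have hc : 0 ≤ 1 - α := by linarith
  have hA := hG.nonneg i j
  have hoff : 0 ≤ (1 - α) / 2 * A i j / (√(deg A i) * √(deg A j)) := by positivity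
  rw [Matrix.sub_apply, Matrix.one_apply, Qmat]
  split_ifs <;> linarith

variable {A} in
lemma Qmat_nonpos_of_ne (hG : IsGraph A) (hα1 : α ≤ 1) {i j : Fin n} (hij : i ≠ j) :
    Qmat A α i j ≤ 0 := by
  simpa [one_apply_ne hij] using one_sub_Qmat_nonneg hG hα1 i j

lemma gradf_eq_mulVec_add (v : Fin n) (z : Fin n → ℝ) :
    gradf A α v z = Qmat A α *ᵥ z + gradf A α v 0 := by
  ext i
  simp [gradf, sub_eq_add_neg]

lemma gradf_zero_nonpos (hα : 0 ≤ α) (v : Fin n) : gradf A α v 0 ≤ 0 := by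
  intro i
  simp only [gradf, mulVec_zero, Pi.zero_apply, zero_sub, neg_nonpos]
  split_ifs <;> positivity

def istaStep (α ρ : ℝ) (v : Fin n) (z : Fin n → ℝ) :
    Fin n → ℝ :=
  softT A (α * ρ) (z - gradf A α v z)

variable {A} in
lemma istaStep_monotone (hG : IsGraph A) (hα1 : α ≤ 1) (hαρ : 0 ≤ α * ρ) (v : Fin n) :
    Monotone (istaStep A α ρ v) := by
  intro z z' h
  have hforward : ∀ w, w - gradf A α v w = (1 - Qmat A α) *ᵥ w - gradf A α v 0 := fun w => by
    rw [gradf_eq_mulVec_add A v w, sub_mulVec, one_mulVec]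
    abel
  refine softT_monotone A hαρ ?_
  rw [hforward, hforward]
  exact sub_le_sub_right (monotone_mulVec_of_nonneg (one_sub_Qmat_nonneg hG hα1) h) _

lemma istaStep_zero_nonneg (hα : 0 ≤ α) (hαρ : 0 ≤ α * ρ) (v : Fin n) :
    0 ≤ istaStep A α ρ v 0 :=
  softT_nonneg A hαρ (by simpa using gradf_zero_nonpos A hα v)

lemma fPR_eq_dotProduct (v : Fin n) (x : Fin n → ℝ) :
    fPR A α v x = (x ⬝ᵥ Qmat A α *ᵥ x) / 2 - α * (x v / √(deg A v)) := by
  simp only [fPR, dotProduct]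
  ring

lemma fPR_midpoint (v : Fin n) (x y : Fin n → ℝ) :
    fPR A α v ((2⁻¹ : ℝ) • (x + y))
      = (fPR A α v x + fPR A α v y) / 2 - (x - y) ⬝ᵥ Qmat A α *ᵥ (x - y) / 8 := by
  simp only [fPR_eq_dotProduct, midpoint_dotProduct_mulVec, Pi.smul_apply, Pi.add_apply,
    smul_eq_mul]
  ring

lemma l1w_midpoint_le (x y : Fin n → ℝ) :
    l1w A ((2⁻¹ : ℝ) • (x + y)) ≤ (l1w A x + l1w A y) / 2 := by
  simp only [l1w, Pi.smul_apply, Pi.add_apply, smul_eq_mul, abs_mul,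
    abs_of_pos (by norm_num : (0 : ℝ) < 2⁻¹), ← Finset.sum_add_distrib, Finset.sum_div]
  refine Finset.sum_le_sum fun i _ => ?_
  have := abs_add_le (x i) (y i)
  have := Real.sqrt_nonneg (deg A i)
  nlinarith

lemma Freg_midpoint_le (hαρ : 0 ≤ α * ρ) (v : Fin n) (x y : Fin n → ℝ) :
    Freg A α v ρ ((2⁻¹ : ℝ) • (x + y))
      ≤ (Freg A α v ρ x + Freg A α v ρ y) / 2
        - (x - y) ⬝ᵥ Qmat A α *ᵥ (x - y) / 8 := by
  have := mul_le_mul_of_nonneg_left (l1w_midpoint_le A x y) hαρ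
  simp only [Freg, fPR_midpoint A]
  linarith

variable {A} in
lemma Freg_abs_le (hG : IsGraph A) (hα : 0 ≤ α) (hα1 : α ≤ 1) (v : Fin n)
    (x : Fin n → ℝ) :
    Freg A α v ρ |x| ≤ Freg A α v ρ x := by
  have hquad := dotProduct_mulVec_abs_le (fun _ _ => Qmat_nonpos_of_ne hG hα1) x
  have hlin : x v / √(deg A v) ≤ |x v| / √(deg A v) :=
    div_le_div_of_nonneg_right (le_abs_self _) (Real.sqrt_nonneg _)
  have hl1 : l1w A |x| = l1w A x := by simp [l1w]
  simp only [Freg, fPR_eq_dotProduct, hl1, Pi.abs_apply]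
  nlinarith [mul_le_mul_of_nonneg_left hlin hα]

lemma dotProduct_Qmat_mulVec (z : Fin n → ℝ) :
    z ⬝ᵥ Qmat A α *ᵥ z = (1 + α) / 2 * (z ⬝ᵥ z)
      - (1 - α) / 2 *
        ((fun i => z i / √(deg A i)) ⬝ᵥ A *ᵥ fun i => z i / √(deg A i)) := by
  simp only [dotProduct, mulVec, Qmat, Finset.mul_sum, sub_mul, mul_sub, Finset.sum_sub_distrib,
    ite_mul, zero_mul, Finset.sum_ite_eq, Finset.mem_univ, if_true]
  congr 1
  · exact Finset.sum_congr rfl fun i _ => by ring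
  · exact Finset.sum_congr rfl fun i _ => Finset.sum_congr rfl fun j _ => by ring

variable {A} in
lemma mul_dotProduct_self_le_dotProduct_Qmat_mulVec (hG : IsGraph A) (hα1 : α ≤ 1)
    (z : Fin n → ℝ) : α * (z ⬝ᵥ z) ≤ z ⬝ᵥ Qmat A α *ᵥ z := by
  set u : Fin n → ℝ := fun i => z i / √(deg A i)
  have hrow : ∑ i, (∑ j, A i j) * u i ^ 2 = z ⬝ᵥ z := by
    refine Finset.sum_congr rfl fun i _ => ?_
    change deg A i * (z i / √(deg A i)) ^ 2 = z i * z i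
    rw [div_pow, Real.sq_sqrt (hG.deg_pos i).le, mul_div_cancel₀ _ (hG.deg_pos i).ne']
    ring
  have hL := dotProduct_mulVec_le_sum_rowSum_mul_sq hG.symm hG.nonneg u
  rw [dotProduct_Qmat_mulVec A]
  nlinarith [mul_le_mul_of_nonneg_left (hL.trans hrow.le) (by linarith : 0 ≤ (1 - α) / 2)]

variable {A} in
lemma eq_of_Freg_le_of_forall_Freg_le (hG : IsGraph A) (hα : 0 < α) (hα1 : α ≤ 1)
    (hρ : 0 ≤ ρ) (v : Fin n) {x y : Fin n → ℝ}
    (hmin : ∀ z, Freg A α v ρ x ≤ Freg A α v ρ z)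
    (hy : Freg A α v ρ y ≤ Freg A α v ρ x) : x = y := by
  have hmid := Freg_midpoint_le A (mul_nonneg hα.le hρ) v x y
  have hquad : (x - y) ⬝ᵥ Qmat A α *ᵥ (x - y) ≤ 0 := by
    linarith [hmin ((2⁻¹ : ℝ) • (x + y))]
  have hcoer := mul_dotProduct_self_le_dotProduct_Qmat_mulVec hG hα1 (x - y)
  have hself : (x - y) ⬝ᵥ (x - y) = 0 :=
    le_antisymm (nonpos_of_mul_nonpos_right (hcoer.trans hquad) hα)
      (Finset.sum_nonneg fun i _ => mul_self_nonneg _)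
  exact sub_eq_zero.mp (dotProduct_self_eq_zero.mp hself)

end PageRank

/-- The ISTA iterates `x_{k+1} = prox_{g_A}(x_k − ∇f(x_k))` started at
`x₀ = 0` are coordinatewise nondecreasing: `0 ≤ x_k ≤ x_{k+1}` componentwise for all `k`.
Consequently, the unique minimizer `x⋆(ρ)` of `F_ρ` is coordinatewise nonnegative. -/
theorem ista_iterates_monotone_and_minimizer_nonneg
    {n : ℕ} (A : Matrix (Fin n) (Fin n) ℝ) (hG : IsGraph A)
    (α ρ : ℝ) (hα : 0 < α) (hα1 : α ≤ 1) (hρ : 0 < ρ) (v : Fin n)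
    (x : ℕ → Fin n → ℝ)
    (hx0 : x 0 = 0)
    (hxs : ∀ k, x (k + 1) = softT A (α * ρ) (fun i => x k i - gradf A α v (x k) i)) :
    (∀ (k : ℕ) (i : Fin n), 0 ≤ x k i ∧ x k i ≤ x (k + 1) i) ∧
    ∀ xstar : Fin n → ℝ,
      (∀ z, Freg A α v ρ xstar ≤ Freg A α v ρ z) → ∀ i : Fin n, 0 ≤ xstar i := by
  have hαρ : 0 ≤ α * ρ := by positivity
  have hiter : ∀ k, x k = (istaStep A α ρ v)^[k] 0 := by
    intro k
    induction k with
    | zero => exact hx0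
    | succ k ih => rw [hxs, Function.iterate_succ_apply', ← ih]; rfl
  have hmono : Monotone x := by
    simpa only [← hiter] using
      (istaStep_monotone hG hα1 hαρ v).monotone_iterate_of_le_map
        (istaStep_zero_nonneg A hα.le hαρ v)
  refine ⟨fun k i => ⟨?_, hmono k.le_succ i⟩, fun xstar hmin i => ?_⟩
  · simpa [hx0] using hmono k.zero_le i
  · have habs := eq_of_Freg_le_of_forall_Freg_le hG hα hα1 hρ.le v hmin
      (Freg_abs_le hG hα.le hα1 v xstar)
    rw [congrFun habs i, Pi.abs_apply]
    exact abs_nonneg _
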